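/- Let f ∈ C²([a,0)) satisfy f' < 0, lim_{τ→0⁻} f(τ) = −∞, lim_{τ→0⁻} |f'(τ)|² e^{2γ̃ f(τ)} = m with γ̃, m > 0, and assume the limit lim_{τ→0⁻} (f'' + γ̃ |f'|²)(τ) exists. Then there exists a constant c such that lim_{τ→0⁻} (f'(τ) e^{γ̃ f(τ)} + √m)/τ² = c. -/

import Mathlib

/-!
Put `g = f' e^{γ̃ f}`. Then `g² → m` and `g < 0` give `g → -√m`, and
`g' = (f'' + γ̃ f'²) e^{γ̃ f}`. Since `(e^{γ̃ f})' = γ̃ g` and `e^{γ̃ f} → 0`, l'Hôpital's rule gives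
`e^{γ̃ f(τ)} / τ → -γ̃ √m`. A second application of l'Hôpital's rule to `(g + √m) / τ²`, whose
derivative quotient is `(f'' + γ̃ f'²) · (e^{γ̃ f} / τ) / 2`, yields the limit `-L γ̃ √m / 2`,
where `L` is the limit of `f'' + γ̃ f'²`.
-/

open Filter Set Real
open scoped Topology

theorem tendsto_neg_sqrt_of_tendsto_sq {α : Type*} {l : Filter α} {g : α → ℝ} {m : ℝ}
    (hsq : Tendsto (fun x => g x ^ 2) l (𝓝 m)) (hneg : ∀ᶠ x in l, g x < 0) :
    Tendsto g l (𝓝 (-√m)) := by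
  refine ((continuous_sqrt.tendsto m).comp hsq).neg.congr' ?_
  filter_upwards [hneg] with x hx
  simp [sqrt_sq_eq_abs, abs_of_neg hx]

theorem ContDiffOn.eventually_differentiableAt_deriv_nhdsLT {f : ℝ → ℝ} {a b : ℝ}
    (hab : a < b) (hf : ContDiffOn ℝ 2 f (Ico a b)) :
    ∀ᶠ x in 𝓝[<] b, DifferentiableAt ℝ f x ∧ DifferentiableAt ℝ (deriv f) x := by
  have hf' : ContDiffOn ℝ 2 f (Ioo a b) := hf.mono Ioo_subset_Ico_self
  have hdf' : ContDiffOn ℝ 1 (deriv f) (Ioo a b) := hf'.deriv_of_isOpen isOpen_Ioo (by norm_num)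
  filter_upwards [Ioo_mem_nhdsLT hab] with x hx
  have hx' : Ioo a b ∈ 𝓝 x := isOpen_Ioo.mem_nhds hx
  exact ⟨(hf'.differentiableOn (by norm_num)).differentiableAt hx',
    (hdf'.differentiableOn one_ne_zero).differentiableAt hx'⟩

theorem hasDerivAt_deriv_mul_exp {f : ℝ → ℝ} (γ : ℝ) {x : ℝ} (hf : DifferentiableAt ℝ f x)
    (hf' : DifferentiableAt ℝ (deriv f) x) :
    HasDerivAt (fun τ => deriv f τ * exp (γ * f τ))
      ((deriv (deriv f) x + γ * deriv f x ^ 2) * exp (γ * f x)) x := by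
  have hexp := (hf.hasDerivAt.const_mul γ).exp
  exact (hf'.hasDerivAt.mul hexp).congr_deriv (by ring)

theorem tendsto_div_nhdsLT_zero_of_hasDerivAt {u u' : ℝ → ℝ} {l : ℝ}
    (hu : ∀ᶠ x in 𝓝[<] 0, HasDerivAt u (u' x) x) (hu0 : Tendsto u (𝓝[<] 0) (𝓝 0))
    (hu' : Tendsto u' (𝓝[<] 0) (𝓝 l)) :
    Tendsto (fun x => u x / x) (𝓝[<] 0) (𝓝 l) := by
  refine HasDerivAt.lhopital_zero_nhdsLT (g' := fun _ => 1) hu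
    (Eventually.of_forall hasDerivAt_id) (Eventually.of_forall fun _ => one_ne_zero) hu0
    (tendsto_nhdsWithin_of_tendsto_nhds tendsto_id) ?_
  simpa using hu'

theorem tendsto_div_sq_nhdsLT_zero_of_hasDerivAt {u u' : ℝ → ℝ} {l : ℝ}
    (hu : ∀ᶠ x in 𝓝[<] 0, HasDerivAt u (u' x) x) (hu0 : Tendsto u (𝓝[<] 0) (𝓝 0))
    (hu' : Tendsto (fun x => u' x / x) (𝓝[<] 0) (𝓝 l)) :
    Tendsto (fun x => u x / x ^ 2) (𝓝[<] 0) (𝓝 (l / 2)) := by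
  have hsq0 : Tendsto (fun x : ℝ => x ^ 2) (𝓝[<] 0) (𝓝 0) :=
    tendsto_nhdsWithin_of_tendsto_nhds (by simpa using (continuous_pow 2).tendsto (0 : ℝ))
  refine HasDerivAt.lhopital_zero_nhdsLT (g' := fun x => 2 * x) hu
    (Eventually.of_forall fun x => by simpa using hasDerivAt_pow 2 x) ?_ hu0 hsq0 ?_
  · filter_upwards [self_mem_nhdsWithin] with x (hx : x < 0)
    linarith
  · refine (hu'.div_const 2).congr fun x => ?_
    rw [div_div, mul_comm]

theorem asymptotic_f_prime_exp_general (a : ℝ) (ha : a < 0) (f : ℝ → ℝ) (γtil m : ℝ)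
    (hγtil : 0 < γtil)
    (hf : ContDiffOn ℝ 2 f (Set.Ico a 0))
    (hf' : ∀ τ ∈ Set.Ico a (0:ℝ), deriv f τ < 0)
    (h1 : Filter.Tendsto f (nhdsWithin 0 (Set.Iio 0)) Filter.atBot)
    (h2 : Filter.Tendsto (fun τ : ℝ => (deriv f τ) ^ 2 * Real.exp (2 * γtil * f τ))
      (nhdsWithin 0 (Set.Iio 0)) (nhds m))
    (h3 : ∃ L : ℝ, Filter.Tendsto (fun τ : ℝ => deriv (deriv f) τ + γtil * (deriv f τ) ^ 2)
      (nhdsWithin 0 (Set.Iio 0)) (nhds L)) :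
    ∃ c : ℝ, Filter.Tendsto
      (fun τ : ℝ => (deriv f τ * Real.exp (γtil * f τ) + Real.sqrt m) / τ ^ 2)
      (nhdsWithin 0 (Set.Iio 0)) (nhds c) := by
  obtain ⟨L, hL⟩ := h3
  have hdiff := hf.eventually_differentiableAt_deriv_nhdsLT ha
  have hg : Tendsto (fun τ => deriv f τ * exp (γtil * f τ)) (𝓝[<] 0) (𝓝 (-√m)) := by
    refine tendsto_neg_sqrt_of_tendsto_sq (h2.congr fun τ => ?_) ?_
    · rw [mul_pow, ← exp_nat_mul]
      ring_nf
    · filter_upwards [Ioo_mem_nhdsLT ha] with τ hτ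
      exact mul_neg_of_neg_of_pos (hf' τ (Ioo_subset_Ico_self hτ)) (exp_pos _)
  have hexp_div : Tendsto (fun τ => exp (γtil * f τ) / τ) (𝓝[<] 0) (𝓝 (γtil * -√m)) := by
    refine tendsto_div_nhdsLT_zero_of_hasDerivAt ?_
      (tendsto_exp_atBot.comp (h1.const_mul_atBot hγtil)) (hg.const_mul γtil)
    filter_upwards [hdiff] with τ hτ
    exact ((hτ.1.hasDerivAt.const_mul γtil).exp).congr_deriv (by ring)
  refine ⟨L * (γtil * -√m) / 2, tendsto_div_sq_nhdsLT_zero_of_hasDerivAt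
    (u' := fun τ => (deriv (deriv f) τ + γtil * deriv f τ ^ 2) * exp (γtil * f τ)) ?_ ?_ ?_⟩
  · filter_upwards [hdiff] with τ hτ
    exact (hasDerivAt_deriv_mul_exp γtil hτ.1 hτ.2).add_const _
  · simpa using hg.add_const √m
  · simpa only [mul_div_assoc] using hL.mul hexp_div

/-- Under the standard ARW asymptotics for `f`, and assuming `f'' + γtil|f'|²` has a limit
at `0⁻`, there is a constant `c` with `(f' e^{γtil f} + √m)/τ² → c` as `τ → 0⁻`. -/
theorem asymptotic_f_prime_exp (a : ℝ) (ha : a < 0) (f : ℝ → ℝ) (γtil m : ℝ)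
    (hγtil : 0 < γtil) (hm : 0 < m)
    (hf : ContDiffOn ℝ 2 f (Set.Ico a 0))
    (hf' : ∀ τ ∈ Set.Ico a (0:ℝ), deriv f τ < 0)
    (h1 : Filter.Tendsto f (nhdsWithin 0 (Set.Iio 0)) Filter.atBot)
    (h2 : Filter.Tendsto (fun τ : ℝ => (deriv f τ) ^ 2 * Real.exp (2 * γtil * f τ))
      (nhdsWithin 0 (Set.Iio 0)) (nhds m))
    (h3 : ∃ L : ℝ, Filter.Tendsto (fun τ : ℝ => deriv (deriv f) τ + γtil * (deriv f τ) ^ 2)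
      (nhdsWithin 0 (Set.Iio 0)) (nhds L)) :
    ∃ c : ℝ, Filter.Tendsto
      (fun τ : ℝ => (deriv f τ * Real.exp (γtil * f τ) + Real.sqrt m) / τ ^ 2)
      (nhdsWithin 0 (Set.Iio 0)) (nhds c) :=
  asymptotic_f_prime_exp_general a ha f γtil m hγtil hf hf' h1 h2 h3
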